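/- (Abstract Matching Property for terms.) Let t_p be a pattern and t a concrete term matching it, so there is a substitution σ with σ(t_p) = t. Let t' be an abstract term with t ≺ t'. Then t' abstractly matches t_p with witness σ' such that dom(σ) = dom(σ'), σ(x) ≺ σ'(x) for all x ∈ dom(σ), and t ≺ σ'(t_p). -/

import Mathlib

namespace AbsRW

/-- Match types for pattern variables and `⋆` nodes. -/
inductive MatchType : Type where
  | Val : MatchType
  | NonVal : MatchType
  | All : MatchType
deriving DecidableEq

/-- Abstract terms `term⋆`: nonvalue nodes, value nodes, constants, pattern
variables, and abstract `⋆` nodes, each annotated with a match type.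
`S` is the type of symbols, `C` of constants, `V` of variables. -/
inductive TmS (S C V : Type) : Type where
  | nonval : S → List (TmS S C V) → TmS S C V
  | val : S → List (TmS S C V) → TmS S C V
  | const : C → TmS S C V
  | pvar : V → MatchType → TmS S C V
  | star : MatchType → TmS S C V

namespace TmS

variable {S C V : Type}

def isValRoot : TmS S C V → Prop
  | .val _ _ => True
  | .const _ => True
  | _ => False

def isNonvalRoot : TmS S C V → Prop
  | .nonval _ _ => True
  | _ => False

/-- Terms that match only values. -/
def isValLike : TmS S C V → Prop
  | .val _ _ => True
  | .const _ => True
  | .pvar _ .Val => True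
  | .star .Val => True
  | _ => False

/-- Terms that match only nonvalues. -/
def isNonvalLike : TmS S C V → Prop
  | .nonval _ _ => True
  | .pvar _ .NonVal => True
  | .star .NonVal => True
  | _ => False

/-- Whether a term may be the image of a variable with the given match type. -/
def mtOK : MatchType → TmS S C V → Prop
  | .All, _ => True
  | .Val, t => t.isValLike
  | .NonVal, t => t.isNonvalLike

/-- Applying a partial substitution to an abstract term (unbound variables
are left in place). -/
def subst (σ : V → Option (TmS S C V)) : TmS S C V → TmS S C V
  | .nonval s ts => .nonval s (ts.attach.map fun x => subst σ x.1)
  | .val s ts => .val s (ts.attach.map fun x => subst σ x.1)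
  | .const c => .const c
  | .pvar v mt => (σ v).getD (.pvar v mt)
  | .star mt => .star mt
  decreasing_by
    all_goals
      simp_wf
      have := List.sizeOf_lt_of_mem x.2
      omega

/-- Concrete terms: no variables and no `⋆` nodes. -/
inductive Concrete : TmS S C V → Prop where
  | nonval {s ts} : (∀ t ∈ ts, Concrete t) → Concrete (.nonval s ts)
  | val {s ts} : (∀ t ∈ ts, Concrete t) → Concrete (.val s ts)
  | const {c} : Concrete (.const c)

/-- Star-free terms (variables allowed). -/
inductive StarFree : TmS S C V → Prop where
  | nonval {s ts} : (∀ t ∈ ts, StarFree t) → StarFree (.nonval s ts)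
  | val {s ts} : (∀ t ∈ ts, StarFree t) → StarFree (.val s ts)
  | const {c} : StarFree (.const c)
  | pvar {v mt} : StarFree (.pvar v mt)

/-- `OccMT p v mt`: variable `v` occurs in `p` with match type `mt`. -/
inductive OccMT : TmS S C V → V → MatchType → Prop where
  | pvar {v mt} : OccMT (.pvar v mt) v mt
  | nonval {s ts t v mt} : t ∈ ts → OccMT t v mt → OccMT (.nonval s ts) v mt
  | val {s ts t v mt} : t ∈ ts → OccMT t v mt → OccMT (.val s ts) v mt

/-- `OccNV t N n`: a nonvalue node with symbol `N` and arity `n` occurs in `t`. -/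
inductive OccNV : TmS S C V → S → ℕ → Prop where
  | here {N ts} : OccNV (.nonval N ts) N ts.length
  | nonval {s0 ts t N n} : t ∈ ts → OccNV t N n → OccNV (.nonval s0 ts) N n
  | val {s0 ts t N n} : t ∈ ts → OccNV t N n → OccNV (.val s0 ts) N n

/-- The ordering `≺` on abstract terms: the reflexive, transitive, congruent
closure of `nonval(s,t̄) ≺ ⋆_NonVal`, `val(s,t̄) ≺ ⋆_Val`, `t ≺ ⋆_All`. -/
inductive Prec : TmS S C V → TmS S C V → Prop where
  | refl {t} : Prec t t
  | trans {a b c} : Prec a b → Prec b c → Prec a c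
  | nonvalCongr {s ts ts'} : ts.length = ts'.length →
      (∀ p ∈ ts.zip ts', Prec p.1 p.2) → Prec (.nonval s ts) (.nonval s ts')
  | valCongr {s ts ts'} : ts.length = ts'.length →
      (∀ p ∈ ts.zip ts', Prec p.1 p.2) → Prec (.val s ts) (.val s ts')
  | starNonVal {s ts} : Prec (.nonval s ts) (.star .NonVal)
  | starVal {s ts} : Prec (.val s ts) (.star .Val)
  | starAll {t} : Prec t (.star .All)

/-- The extended ordering `≺` on terms with variables: `Prec` extended with the
subsumption ordering (a substitution instance is below the pattern) and
`x_mt ≺ ⋆_mt`. -/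
inductive PrecV : TmS S C V → TmS S C V → Prop where
  | refl {t} : PrecV t t
  | trans {a b c} : PrecV a b → PrecV b c → PrecV a c
  | nonvalCongr {s ts ts'} : ts.length = ts'.length →
      (∀ p ∈ ts.zip ts', PrecV p.1 p.2) → PrecV (.nonval s ts) (.nonval s ts')
  | valCongr {s ts ts'} : ts.length = ts'.length →
      (∀ p ∈ ts.zip ts', PrecV p.1 p.2) → PrecV (.val s ts) (.val s ts')
  | starNonVal {s ts} : PrecV (.nonval s ts) (.star .NonVal)
  | starVal {s ts} : PrecV (.val s ts) (.star .Val)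
  | starAll {t} : PrecV t (.star .All)
  | subsum (σ : V → Option (TmS S C V)) (t : TmS S C V) : PrecV (t.subst σ) t
  | varStar {v mt} : PrecV (.pvar v mt) (.star mt)

/-- A maximal element of the ordering `≺` (a "top" abstract reduction state). -/
def IsTop (t : TmS S C V) : Prop := ∀ u : TmS S C V, Prec u t

end TmS

/-- Least upper bound with respect to `≺`. -/
def IsLubT {S C V : Type} (A : Set (TmS S C V)) (u : TmS S C V) : Prop :=
  (∀ x ∈ A, TmS.Prec x u) ∧ ∀ w, (∀ x ∈ A, TmS.Prec x w) → TmS.Prec u w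

/-- Optional least upper bound: `none` exactly when the set is empty. -/
def OptIsLubT {S C V : Type} (A : Set (TmS S C V)) (o : Option (TmS S C V)) : Prop :=
  (A = ∅ ∧ o = none) ∨ ∃ u, o = some u ∧ IsLubT A u

/-- A partial substitution respects match types on the occurrences `occ`. -/
def MTOkO {S C V : Type} (σ : V → Option (TmS S C V)) (occ : V → MatchType → Prop) : Prop :=
  ∀ v mt t, occ v mt → σ v = some t → TmS.mtOK mt t

/-- Abstract configurations: a term together with a reduction state. -/
structure ConfS (S C V : Type) : Type where
  tm : TmS S C V
  st : TmS S C V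

namespace ConfS

variable {S C V : Type}

def subst (σ : V → Option (TmS S C V)) (c : ConfS S C V) : ConfS S C V :=
  ⟨c.tm.subst σ, c.st.subst σ⟩

def OccMT (c : ConfS S C V) (v : V) (mt : MatchType) : Prop :=
  c.tm.OccMT v mt ∨ c.st.OccMT v mt

def OccNV (c : ConfS S C V) (N : S) (n : ℕ) : Prop :=
  c.tm.OccNV N n ∨ c.st.OccNV N n

def Concrete (c : ConfS S C V) : Prop := c.tm.Concrete ∧ c.st.Concrete

def StarFree (c : ConfS S C V) : Prop := c.tm.StarFree ∧ c.st.StarFree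

def Prec (c c' : ConfS S C V) : Prop := c.tm.Prec c'.tm ∧ c.st.Prec c'.st

def PrecV (c c' : ConfS S C V) : Prop := c.tm.PrecV c'.tm ∧ c.st.PrecV c'.st

end ConfS

/-- Right-hand sides of SOS rules (carried inside frames). -/
inductive RhsS (S C V F : Type) : Type where
  | build : ConfS S C V → RhsS S C V F
  | letStep : ConfS S C V → ConfS S C V → RhsS S C V F → RhsS S C V F
  | letSem : ConfS S C V → F → List (ConfS S C V) → RhsS S C V F → RhsS S C V F

namespace RhsS

variable {S C V F : Type}

def subst (σ : V → Option (TmS S C V)) : RhsS S C V F → RhsS S C V F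
  | .build c => .build (c.subst σ)
  | .letStep c1 c2 r => .letStep (c1.subst σ) (c2.subst σ) (r.subst σ)
  | .letSem c f args r => .letSem (c.subst σ) f (args.map (ConfS.subst σ)) (r.subst σ)

def OccMT : RhsS S C V F → V → MatchType → Prop
  | .build c => c.OccMT
  | .letStep c1 c2 r => fun v mt => c1.OccMT v mt ∨ c2.OccMT v mt ∨ r.OccMT v mt
  | .letSem c _ args r => fun v mt =>
      c.OccMT v mt ∨ (∃ a ∈ args, ConfS.OccMT a v mt) ∨ r.OccMT v mt

def OccNV : RhsS S C V F → S → ℕ → Prop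
  | .build c => fun N n => c.OccNV N n
  | .letStep c1 c2 r => fun N n => c1.OccNV N n ∨ c2.OccNV N n ∨ r.OccNV N n
  | .letSem c _ args r => fun N n =>
      c.OccNV N n ∨ (∃ a ∈ args, ConfS.OccNV a N n) ∨ r.OccNV N n

def StarFree : RhsS S C V F → Prop
  | .build c => c.StarFree
  | .letStep c1 c2 r => c1.StarFree ∧ c2.StarFree ∧ r.StarFree
  | .letSem c _ args r => c.StarFree ∧ (∀ a ∈ args, ConfS.StarFree a) ∧ r.StarFree

/-- Congruent lift of `≺` to rule right-hand sides. -/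
inductive PrecR : RhsS S C V F → RhsS S C V F → Prop where
  | build {c c'} : c.Prec c' → PrecR (.build c) (.build c')
  | letStep {c1 c1' c2 c2' r r'} : c1.Prec c1' → c2.Prec c2' → PrecR r r' →
      PrecR (.letStep c1 c2 r) (.letStep c1' c2' r')
  | letSem {c c' f args args' r r'} : c.Prec c' → args.length = args'.length →
      (∀ p ∈ args.zip args', ConfS.Prec p.1 p.2) → PrecR r r' →
      PrecR (.letSem c f args r) (.letSem c' f args' r')

/-- Congruent lift of the extended ordering to rule right-hand sides. -/
inductive PrecVR : RhsS S C V F → RhsS S C V F → Prop where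
  | build {c c'} : c.PrecV c' → PrecVR (.build c) (.build c')
  | letStep {c1 c1' c2 c2' r r'} : c1.PrecV c1' → c2.PrecV c2' → PrecVR r r' →
      PrecVR (.letStep c1 c2 r) (.letStep c1' c2' r')
  | letSem {c c' f args args' r r'} : c.PrecV c' → args.length = args'.length →
      (∀ p ∈ args.zip args', ConfS.PrecV p.1 p.2) → PrecVR r r' →
      PrecVR (.letSem c f args r) (.letSem c' f args' r')

end RhsS

/-- A frame `[c → rhs]` of a context. -/
structure FrameS (S C V F : Type) : Type where
  pat : ConfS S C V
  rhs : RhsS S C V F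

namespace FrameS

variable {S C V F : Type}

def subst (σ : V → Option (TmS S C V)) (f : FrameS S C V F) : FrameS S C V F :=
  ⟨f.pat.subst σ, f.rhs.subst σ⟩

def OccMT (f : FrameS S C V F) (v : V) (mt : MatchType) : Prop :=
  f.pat.OccMT v mt ∨ f.rhs.OccMT v mt

def OccNV (f : FrameS S C V F) (N : S) (n : ℕ) : Prop :=
  f.pat.OccNV N n ∨ f.rhs.OccNV N n

def StarFree (f : FrameS S C V F) : Prop := f.pat.StarFree ∧ f.rhs.StarFree

def Prec (f f' : FrameS S C V F) : Prop := f.pat.Prec f'.pat ∧ RhsS.PrecR f.rhs f'.rhs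

def PrecV (f f' : FrameS S C V F) : Prop := f.pat.PrecV f'.pat ∧ RhsS.PrecVR f.rhs f'.rhs

end FrameS

/-- Contexts: stacks of frames ending in `emp` or a context variable.
`K` is the type of context variables. -/
inductive CtxS (S C V K F : Type) : Type where
  | emp : CtxS S C V K F
  | kvar : K → CtxS S C V K F
  | push : CtxS S C V K F → FrameS S C V F → CtxS S C V K F

/-- A substitution: an assignment to term variables and to context variables. -/
structure PSubstS (S C V K F : Type) : Type where
  tm : V → Option (TmS S C V)
  kv : K → Option (CtxS S C V K F)

namespace CtxS

variable {S C V K F : Type}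

def subst (θ : PSubstS S C V K F) : CtxS S C V K F → CtxS S C V K F
  | .emp => .emp
  | .kvar k => (θ.kv k).getD (.kvar k)
  | .push Kc f => .push (Kc.subst θ) (f.subst θ.tm)

def OccMT : CtxS S C V K F → V → MatchType → Prop
  | .emp => fun _ _ => False
  | .kvar _ => fun _ _ => False
  | .push Kc f => fun v mt => Kc.OccMT v mt ∨ f.OccMT v mt

def OccK : CtxS S C V K F → K → Prop
  | .emp => fun _ => False
  | .kvar k => fun k' => k = k'
  | .push Kc _ => fun k' => Kc.OccK k'

def OccNV : CtxS S C V K F → S → ℕ → Prop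
  | .emp => fun _ _ => False
  | .kvar _ => fun _ _ => False
  | .push Kc f => fun N n => Kc.OccNV N n ∨ f.OccNV N n

/-- Stack length: the number of frames of a context. -/
def len : CtxS S C V K F → ℕ
  | .emp => 0
  | .kvar _ => 0
  | .push Kc _ => Kc.len + 1

/-- Concrete contexts: ending in `emp`, with star-free frames. -/
inductive Conc : CtxS S C V K F → Prop where
  | emp : Conc .emp
  | push {Kc f} : Conc Kc → f.StarFree → Conc (.push Kc f)

/-- Congruent lift of `≺` to contexts. -/
inductive Prec : CtxS S C V K F → CtxS S C V K F → Prop where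
  | emp : Prec .emp .emp
  | kvar {k} : Prec (.kvar k) (.kvar k)
  | push {Kc Kc' f f'} : Prec Kc Kc' → f.Prec f' → Prec (.push Kc f) (.push Kc' f')

/-- Congruent lift of the extended ordering to contexts. -/
inductive PrecV : CtxS S C V K F → CtxS S C V K F → Prop where
  | emp : PrecV .emp .emp
  | kvar {k} : PrecV (.kvar k) (.kvar k)
  | push {Kc Kc' f f'} : PrecV Kc Kc' → f.PrecV f' → PrecV (.push Kc f) (.push Kc' f')

/-- `Subctx K' K`: `K'` is a subcontext (a tail) of `K`. -/
inductive Subctx : CtxS S C V K F → CtxS S C V K F → Prop where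
  | refl {Kc} : Subctx Kc Kc
  | push {K' Kc f} : Subctx K' Kc → Subctx K' (.push Kc f)

end CtxS

/-- Least upper bound of a set of contexts with respect to `≺`. -/
def IsLubK {S C V K F : Type} (A : Set (CtxS S C V K F)) (u : CtxS S C V K F) : Prop :=
  (∀ x ∈ A, CtxS.Prec x u) ∧ ∀ w, (∀ x ∈ A, CtxS.Prec x w) → CtxS.Prec u w

def OptIsLubK {S C V K F : Type} (A : Set (CtxS S C V K F))
    (o : Option (CtxS S C V K F)) : Prop :=
  (A = ∅ ∧ o = none) ∨ ∃ u, o = some u ∧ IsLubK A u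

/-- An abstract machine state `⟨c | K⟩`. -/
structure AStateS (S C V K F : Type) : Type where
  conf : ConfS S C V
  ctx : CtxS S C V K F

namespace AStateS

variable {S C V K F : Type}

def subst (θ : PSubstS S C V K F) (s : AStateS S C V K F) : AStateS S C V K F :=
  ⟨s.conf.subst θ.tm, s.ctx.subst θ⟩

def OccMT (s : AStateS S C V K F) (v : V) (mt : MatchType) : Prop :=
  s.conf.OccMT v mt ∨ s.ctx.OccMT v mt

def OccK (s : AStateS S C V K F) (k : K) : Prop := s.ctx.OccK k

def OccNV (s : AStateS S C V K F) (N : S) (n : ℕ) : Prop :=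
  s.conf.OccNV N n ∨ s.ctx.OccNV N n

def Concrete (s : AStateS S C V K F) : Prop := s.conf.Concrete ∧ s.ctx.Conc

def Prec (s s' : AStateS S C V K F) : Prop := s.conf.Prec s'.conf ∧ s.ctx.Prec s'.ctx

/-- Stack length of a state. -/
def stacklen (s : AStateS S C V K F) : ℕ := s.ctx.len

end AStateS

/-- The extended ordering `≺` (with subsumption) lifted to states. -/
inductive PrecVState {S C V K F : Type} : AStateS S C V K F → AStateS S C V K F → Prop where
  | lift {c c' Kc Kc'} : ConfS.PrecV c c' → CtxS.PrecV Kc Kc' →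
      PrecVState ⟨c, Kc⟩ ⟨c', Kc'⟩
  | subsum (θ : PSubstS S C V K F) (s : AStateS S C V K F) : PrecVState (s.subst θ) s
  | trans {a b c} : PrecVState a b → PrecVState b c → PrecVState a c

/-- Right-hand sides of abstract machine rules. -/
inductive AmRhsS (S C V K F : Type) : Type where
  | ret : ConfS S C V → CtxS S C V K F → AmRhsS S C V K F
  | letSem : ConfS S C V → F → List (ConfS S C V) → AmRhsS S C V K F → AmRhsS S C V K F

/-- An abstract machine rule. -/
structure AmRuleS (S C V K F : Type) : Type where
  lhs : AStateS S C V K F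
  rhs : AmRhsS S C V K F

/-- An abstract machine: a set of rules together with the (concrete) semantic
functions of the language.  Semantic functions produce only concrete values,
finitely many for each input. -/
structure MachineS (S C V K F : Type) : Type 1 where
  rules : Set (AmRuleS S C V K F)
  sem : F → List (ConfS S C V) → ConfS S C V → Prop
  sem_values : ∀ f args r, sem f args r →
    ((∀ c ∈ args, ConfS.Concrete c ∧ c.tm.isValRoot) ∧ ConfS.Concrete r ∧ r.tm.isValRoot)
  sem_finite : ∀ f args, Set.Finite {r | sem f args r}

/-- Executing the right-hand side of an AM rule concretely. -/
inductive ExecConcRhs {S C V K F : Type} (M : MachineS S C V K F)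
    (θ : PSubstS S C V K F) : AmRhsS S C V K F → AStateS S C V K F → Prop where
  | ret {c Kp} : ExecConcRhs M θ (.ret c Kp) ⟨ConfS.subst θ.tm c, CtxS.subst θ Kp⟩
  | letSem {cret f args rest rr s} : M.sem f (args.map (ConfS.subst θ.tm)) rr →
      ConfS.subst θ.tm cret = rr → MTOkO θ.tm cret.OccMT → ExecConcRhs M θ rest s →
      ExecConcRhs M θ (.letSem cret f args rest) s

/-- One concrete step of the abstract machine by a particular rule. -/
def ConcStepBy {S C V K F : Type} (M : MachineS S C V K F) (ru : AmRuleS S C V K F)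
    (s s' : AStateS S C V K F) : Prop :=
  ∃ θ : PSubstS S C V K F,
    AStateS.subst θ ru.lhs = s ∧ MTOkO θ.tm ru.lhs.OccMT ∧
    ExecConcRhs M θ ru.rhs s'

/-- One concrete step of the abstract machine, `s → s'`. -/
def ConcStep {S C V K F : Type} (M : MachineS S C V K F)
    (s s' : AStateS S C V K F) : Prop :=
  ∃ ru ∈ M.rules, ConcStepBy M ru s s'

/-! ### Abstract matching -/

/-- A substitution concretely matches a term pattern against a concrete term,
with domain exactly the variables of the pattern. -/
def ConcMatchTm {S C V : Type} (σ : V → Option (TmS S C V)) (p t : TmS S C V) : Prop :=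
  TmS.subst σ p = t ∧ MTOkO σ p.OccMT ∧
  (∀ v, (σ v).isSome ↔ ∃ mt, p.OccMT v mt) ∧ t.Concrete

/-- `σA` is the witness of abstractly matching the pattern `p` against the
abstract term `tA`: `p` matches some concretization of `tA`, and `σA` is the
pointwise least upper bound of all concrete matchers. -/
def AbsWitnessTm {S C V : Type} (p tA : TmS S C V) (σA : V → Option (TmS S C V)) : Prop :=
  (∃ t σ, TmS.Prec t tA ∧ ConcMatchTm σ p t) ∧
  ∀ v, OptIsLubT {u | ∃ t σ, TmS.Prec t tA ∧ ConcMatchTm σ p t ∧ σ v = some u} (σA v)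

/-- Concrete matching of a configuration pattern. -/
def ConcMatchConf {S C V : Type} (σ : V → Option (TmS S C V)) (p c : ConfS S C V) : Prop :=
  ConfS.subst σ p = c ∧ MTOkO σ p.OccMT ∧
  (∀ v, (σ v).isSome ↔ ∃ mt, p.OccMT v mt) ∧ c.Concrete

/-- Witness of abstractly matching a configuration pattern against an abstract
configuration. -/
def AbsWitnessConf {S C V : Type} (p cA : ConfS S C V) (σA : V → Option (TmS S C V)) : Prop :=
  (∃ c σ, ConfS.Prec c cA ∧ ConcMatchConf σ p c) ∧
  ∀ v, OptIsLubT {u | ∃ c σ, ConfS.Prec c cA ∧ ConcMatchConf σ p c ∧ σ v = some u} (σA v)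

/-- Concrete matching of a state pattern against a concrete machine state,
with domain exactly the variables of the pattern. -/
def ConcMatchState {S C V K F : Type} (θ : PSubstS S C V K F)
    (p s : AStateS S C V K F) : Prop :=
  AStateS.subst θ p = s ∧ MTOkO θ.tm p.OccMT ∧
  (∀ v, (θ.tm v).isSome ↔ ∃ mt, p.OccMT v mt) ∧
  (∀ k, (θ.kv k).isSome ↔ p.OccK k) ∧
  s.Concrete

/-- Witness of abstractly matching a state pattern against an abstract state. -/
def AbsWitnessState {S C V K F : Type} (p sA : AStateS S C V K F)
    (θA : PSubstS S C V K F) : Prop :=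
  (∃ s θ, AStateS.Prec s sA ∧ ConcMatchState θ p s) ∧
  (∀ v, OptIsLubT {u | ∃ s θ, AStateS.Prec s sA ∧ ConcMatchState θ p s ∧ θ.tm v = some u}
      (θA.tm v)) ∧
  (∀ k, OptIsLubK {Kc | ∃ s θ, AStateS.Prec s sA ∧ ConcMatchState θ p s ∧ θ.kv k = some Kc}
      (θA.kv k))

/-! ### Abstract rewriting -/

/-- Combine two partial substitutions, preferring the first. -/
def combineO {S C V : Type} (σ τ : V → Option (TmS S C V)) : V → Option (TmS S C V) :=
  fun v => (σ v).orElse fun _ => τ v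

def PSubstS.combine {S C V K F : Type} (θ : PSubstS S C V K F)
    (τ : V → Option (TmS S C V)) : PSubstS S C V K F :=
  ⟨combineO θ.tm τ, θ.kv⟩

/-- Executing the right-hand side of an AM rule abstractly, using a base
abstraction `β` for the semantic functions and abstract matching for
premises. -/
inductive ExecAbsRhs {S C V K F : Type}
    (β : F → List (ConfS S C V) → ConfS S C V → Prop) :
    PSubstS S C V K F → AmRhsS S C V K F → AStateS S C V K F → Prop where
  | ret {θ c Kp} : ExecAbsRhs β θ (.ret c Kp) ⟨ConfS.subst θ.tm c, CtxS.subst θ Kp⟩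
  | letSem {θ cret f args rest rr σr s} :
      β f (args.map (ConfS.subst θ.tm)) rr →
      AbsWitnessConf cret rr σr →
      ExecAbsRhs β (θ.combine σr) rest s →
      ExecAbsRhs β θ (.letSem cret f args rest) s

/-- One abstract rewriting step `⇒_β` by a particular rule. -/
def AbsStepBy {S C V K F : Type} (β : F → List (ConfS S C V) → ConfS S C V → Prop)
    (ru : AmRuleS S C V K F) (s s' : AStateS S C V K F) : Prop :=
  ∃ θA : PSubstS S C V K F, AbsWitnessState ru.lhs s θA ∧ ExecAbsRhs β θA ru.rhs s'

/-- One abstract rewriting step `s ⇒_β s'`. -/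
def AbsStep {S C V K F : Type} (M : MachineS S C V K F)
    (β : F → List (ConfS S C V) → ConfS S C V → Prop)
    (s s' : AStateS S C V K F) : Prop :=
  ∃ ru ∈ M.rules, AbsStepBy β ru s s'

/-- The set-extension (multiset/Dershowitz–Manna style) of `≺` on sets of
configurations: every element of `A` is below some element of `B`. -/
def DMLe {S C V : Type} (A B : Set (ConfS S C V)) : Prop :=
  ∀ a ∈ A, ∃ b ∈ B, ConfS.Prec a b

/-- `β` is a base abstraction for `M`: for each semantic function `f`,
`β(f)(cĀ) ⪰ ⋃ { f(c̄) | c̄ ∈ γ(cĀ) }`. -/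
def IsBaseAbs {S C V K F : Type} (M : MachineS S C V K F)
    (β : F → List (ConfS S C V) → ConfS S C V → Prop) : Prop :=
  ∀ f cAs, DMLe
    {r | ∃ cs, List.Forall₂ (fun c cA => ConfS.Concrete c ∧ ConfS.Prec c cA) cs cAs ∧
      M.sem f cs r}
    {r | β f cAs r}

/-! ### The nontermination-cutting relation and the abstraction preorder -/

/-- The nontermination-cutting relation `◁`.  `a ◁ ⟨(⋆_Val, ⊤) | K'⟩` for `K'`
a subcontext of `a`'s context, when every concrete execution starting below
`a` either keeps `a`'s context on the stack or passes through a value with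
`a`'s context. -/
def NontermCut {S C V K F : Type} (M : MachineS S C V K F)
    (a b : AStateS S C V K F) : Prop :=
  ∃ (K' : CtxS S C V K F) (T : TmS S C V), T.IsTop ∧ CtxS.Subctx K' a.ctx ∧
    b = ⟨⟨.star .Val, T⟩, K'⟩ ∧
    ∀ s : AStateS S C V K F, s.Concrete → AStateS.Prec s a →
      ∀ l : List (AStateS S C V K F), l.Chain' (ConcStep M) → l.head? = some s →
        ∀ s', l.getLast? = some s' →
          (CtxS.Subctx s.ctx s'.ctx ∨
            ∃ pre, pre <+: l ∧ ∃ s'', pre.getLast? = some s'' ∧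
              s''.ctx = s.ctx ∧ TmS.Prec s''.conf.tm (.star .Val))

/-- The abstraction preorder `⊑` on abstract machine states. -/
inductive Sqsub {S C V K F : Type} (M : MachineS S C V K F)
    (β : F → List (ConfS S C V) → ConfS S C V → Prop) :
    AStateS S C V K F → AStateS S C V K F → Prop where
  | refl {a} : Sqsub M β a a
  | prec {a c b} : AStateS.Prec a c → Sqsub M β c b → Sqsub M β a b
  | cut {a c b} : NontermCut M a c → Sqsub M β c b → Sqsub M β a b
  | steps {a b} : (∀ c, AbsStep M β a c → Sqsub M β c b) → Sqsub M β a b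

/-- A machine abstraction `(α, β)`: an upper closure operator `α` for the `⊑`
ordering, together with its base abstraction `β`. -/
structure MachineAbs {S C V K F : Type} (M : MachineS S C V K F)
    (β : F → List (ConfS S C V) → ConfS S C V → Prop) : Type where
  α : AStateS S C V K F → AStateS S C V K F
  mono : ∀ a b, Sqsub M β a b → Sqsub M β (α a) (α b)
  le : ∀ a, Sqsub M β a (α a)
  idem : ∀ a, α (α a) = α a

/-- The abstract transition relation `⇒_α`: an abstract rewriting step whose
result is closed under `α`. -/
def AbsStepAlpha {S C V K F : Type} (M : MachineS S C V K F)
    (β : F → List (ConfS S C V) → ConfS S C V → Prop)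
    (α : AStateS S C V K F → AStateS S C V K F)
    (a g : AStateS S C V K F) : Prop :=
  ∃ b, AbsStep M β a b ∧ g = α b

/-! ### Narrowing -/

/-- Composition of substitutions: apply `θ`, then `ρ`. -/
def PSubstS.comp {S C V K F : Type} (θ ρ : PSubstS S C V K F) : PSubstS S C V K F :=
  ⟨fun v => match θ.tm v with
    | some t => some (t.subst ρ.tm)
    | none => ρ.tm v,
   fun k => match θ.kv k with
    | some Kc => some (Kc.subst ρ)
    | none => ρ.kv k⟩

/-- Executing the right-hand side of an AM rule in narrowing mode: witnesses
for premises are computed by unification. -/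
inductive ExecNarrowRhs {S C V K F : Type}
    (β : F → List (ConfS S C V) → ConfS S C V → Prop) :
    PSubstS S C V K F → AmRhsS S C V K F → AStateS S C V K F → Prop where
  | ret {θ c Kp} : ExecNarrowRhs β θ (.ret c Kp) ⟨ConfS.subst θ.tm c, CtxS.subst θ Kp⟩
  | letSem {θ cret f args rest rr ρ s} :
      β f (args.map (ConfS.subst θ.tm)) rr →
      ConfS.subst ρ.tm (ConfS.subst θ.tm cret) = ConfS.subst ρ.tm rr →
      ExecNarrowRhs β (θ.comp ρ) rest s →
      ExecNarrowRhs β θ (.letSem cret f args rest) s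

/-- One narrowing step `↝_β` by a particular rule: the rule's left-hand side
and the state unify, and the (substituted) right-hand side is produced. -/
def NarrowStepBy {S C V K F : Type} (β : F → List (ConfS S C V) → ConfS S C V → Prop)
    (ru : AmRuleS S C V K F) (s s' : AStateS S C V K F) : Prop :=
  ∃ θ : PSubstS S C V K F,
    AStateS.subst θ ru.lhs = AStateS.subst θ s ∧
    MTOkO θ.tm ru.lhs.OccMT ∧ MTOkO θ.tm s.OccMT ∧
    ExecNarrowRhs β θ ru.rhs s'

/-- One narrowing step `s ↝_β s'`. -/
def NarrowStep {S C V K F : Type} (M : MachineS S C V K F)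
    (β : F → List (ConfS S C V) → ConfS S C V → Prop)
    (s s' : AStateS S C V K F) : Prop :=
  ∃ ru ∈ M.rules, NarrowStepBy β ru s s'

/-- The narrowing analogue `↝_α` of the abstract transition relation. -/
def NarrowAlpha {S C V K F : Type} (M : MachineS S C V K F)
    (β : F → List (ConfS S C V) → ConfS S C V → Prop)
    (α : AStateS S C V K F → AStateS S C V K F)
    (a g : AStateS S C V K F) : Prop :=
  ∃ b, NarrowStep M β a b ∧ g = α b

/-! ### Graph patterns -/

/-- The start state of the graph pattern for node type `N` of arity `n`:
`⟨(N(x̄_NonVal), ⊤) | k⟩` with fresh nonvalue variables `x̄` and a fresh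
context variable `κ`. -/
def gpStart {S C V K F : Type} (N : S) (n : ℕ) (x : ℕ → V) (κ : K) : AStateS S C V K F :=
  ⟨⟨.nonval N ((List.range n).map fun i => .pvar (x i) .NonVal), .star .All⟩, .kvar κ⟩

/-- A state of the form `⟨(e_NonVal, μ) | K⟩` which focuses an unknown
nonvalue subterm. -/
def IsEvalVarState {S C V K F : Type} (s : AStateS S C V K F) : Prop :=
  ∃ (v : V) (μ : TmS S C V) (Kc : CtxS S C V K F), s = ⟨⟨.pvar v .NonVal, μ⟩, Kc⟩

/-- The target `⟨(⋆_Val, ⊤) | K⟩` of a transitive edge. -/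
def transTarget {S C V K F : Type} (s : AStateS S C V K F) : AStateS S C V K F :=
  ⟨⟨.star .Val, .star .All⟩, s.ctx⟩

/-- A halting state `⟨(v, μ) | k⟩`, where `v` is a value and `k` is the
original context variable. -/
def IsHaltState {S C V K F : Type} (κ : K) (s : AStateS S C V K F) : Prop :=
  ∃ (v μ : TmS S C V), v.isValLike ∧ s = ⟨⟨v, μ⟩, .kvar κ⟩

/-- The nodes of the graph pattern for node type `N` under abstraction `α`:
generated by `↝_α` from the start state, adding a transitive edge to
`⟨(⋆_Val, ⊤) | K⟩` at any state focusing an unknown nonvalue subterm, and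
halting at value states with the original context variable. -/
inductive GPNode {S C V K F : Type} (M : MachineS S C V K F)
    (β : F → List (ConfS S C V) → ConfS S C V → Prop)
    (α : AStateS S C V K F → AStateS S C V K F)
    (N : S) (n : ℕ) (x : ℕ → V) (κ : K) : AStateS S C V K F → Prop where
  | start : GPNode M β α N n x κ (gpStart N n x κ)
  | narrow {s s'} : GPNode M β α N n x κ s → ¬ IsEvalVarState s → ¬ IsHaltState κ s →
      NarrowAlpha M β α s s' → GPNode M β α N n x κ s'
  | transEdge {s} : GPNode M β α N n x κ s → IsEvalVarState s →
      GPNode M β α N n x κ (transTarget s)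

/-- The edges of the graph pattern: narrowing edges and transitive edges. -/
def GPEdge {S C V K F : Type} (M : MachineS S C V K F)
    (β : F → List (ConfS S C V) → ConfS S C V → Prop)
    (α : AStateS S C V K F → AStateS S C V K F)
    (N : S) (n : ℕ) (x : ℕ → V) (κ : K) (s s' : AStateS S C V K F) : Prop :=
  GPNode M β α N n x κ s ∧
  ((¬ IsEvalVarState s ∧ ¬ IsHaltState κ s ∧ NarrowAlpha M β α s s') ∨
   (IsEvalVarState s ∧ s' = transTarget s))

/-! ### CFG fragments -/

/-- The node set of the weak hammock of the graph with edge relation `E`,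
entry node `n`, and exit node set `T`: the least fixed point of following
edges from `n` without continuing past `T`. -/
inductive Hammock {σ : Type} (E : σ → σ → Prop) (n : σ) (T : Set σ) : σ → Prop where
  | start : Hammock E n T n
  | step {m m'} : Hammock E n T m → m ∉ T → E m m' → Hammock E n T m'

/-- The exit set of the CFG fragment for `s`: states other than `s` whose
stack length does not exceed that of `s`. -/
def Exits {S C V K F : Type} (s : AStateS S C V K F) : Set (AStateS S C V K F) :=
  {t | t ≠ s ∧ t.stacklen ≤ s.stacklen}

/-- `e` is a nonvalue child of the term `t`. -/
def NonvalChild {S C V : Type} (t e : TmS S C V) : Prop :=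
  ∃ s0 ts, t = TmS.nonval s0 ts ∧ e ∈ ts ∧ e.isNonvalLike

/-- The edges of the CFG fragment for the state `st` in the abstract
transition graph of `⇒_α`: edges of the weak hammock bounded by `st` and its
exit set, minus (recursively) the edges of the CFG fragments of states
focusing the nonvalue children of `st`'s term. -/
def FragEdge {S C V K F : Type} (M : MachineS S C V K F)
    (β : F → List (ConfS S C V) → ConfS S C V → Prop)
    (α : AStateS S C V K F → AStateS S C V K F)
    (st a b : AStateS S C V K F) : Prop :=
  Hammock (AbsStepAlpha M β α) st (Exits st) a ∧
  a ∉ Exits st ∧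
  AbsStepAlpha M β α a b ∧
  ∀ e : TmS S C V, NonvalChild st.conf.tm e →
    ∀ (μ' : TmS S C V) (K' : CtxS S C V K F),
      Hammock (AbsStepAlpha M β α) st (Exits st) ⟨⟨e, μ'⟩, K'⟩ →
        ¬ FragEdge M β α ⟨⟨e, μ'⟩, K'⟩ a b
  termination_by sizeOf st.conf.tm
  decreasing_by
    rename_i h _
    obtain ⟨s0, ts, hts, he, -⟩ := h
    have := List.sizeOf_lt_of_mem he
    simp only [hts]
    simp only [TmS.nonval.sizeOf_spec]
    omega

/-- The nodes of the CFG fragment for `st`: hammock nodes reachable from `st`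
or reaching an exit via fragment edges. -/
def FragNode {S C V K F : Type} (M : MachineS S C V K F)
    (β : F → List (ConfS S C V) → ConfS S C V → Prop)
    (α : AStateS S C V K F → AStateS S C V K F)
    (st v : AStateS S C V K F) : Prop :=
  Hammock (AbsStepAlpha M β α) st (Exits st) v ∧
  (Relation.ReflTransGen (FragEdge M β α st) st v ∨
    ∃ t ∈ Exits st, Relation.ReflTransGen (FragEdge M β α st) v t)

/-! ### Technical assumptions on abstractions -/

/-- `θ'` extends `θ`. -/
def PExtends {S C V K F : Type} (θ θ' : PSubstS S C V K F) : Prop :=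
  (∀ v t, θ.tm v = some t → θ'.tm v = some t) ∧
  (∀ k Kc, θ.kv k = some Kc → θ'.kv k = some Kc)

/-- The `⊑` ordering with all intermediate states of stack length at least
`n`. -/
inductive SqsubAbove {S C V K F : Type} (M : MachineS S C V K F)
    (β : F → List (ConfS S C V) → ConfS S C V → Prop) (n : ℕ) :
    AStateS S C V K F → AStateS S C V K F → Prop where
  | refl {a} : SqsubAbove M β n a a
  | prec {a c b} : n ≤ c.stacklen → AStateS.Prec a c → SqsubAbove M β n c b →
      SqsubAbove M β n a b
  | cut {a c b} : n ≤ c.stacklen → NontermCut M a c → SqsubAbove M β n c b →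
      SqsubAbove M β n a b
  | steps {a b} : (∀ c, AbsStep M β a c → n ≤ c.stacklen) →
      (∀ c, AbsStep M β a c → SqsubAbove M β n c b) →
      SqsubAbove M β n a b

end AbsRW

/-
`σ'` is the pointwise least upper bound of all matchers of `tp` against concretizations of `t'`.
These least upper bounds exist because, read structurally, `≺` is a partial order in which two
terms with a common lower bound have a meet, and in which going strictly up strictly
decreases a natural-number weight. The upper bound of a nonempty set with maximal weight is then
below every other upper bound, since otherwise its meet with that bound would weigh more.
As `σ` is one of the matchers, `σ ≺ σ'` pointwise, and `t = σ(tp) ≺ σ'(tp)` because substitution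
is monotone.
-/

theorem Option.Rel.isSome_iff {α β : Type*} {r : α → β → Prop} :
    {a : Option α} → {b : Option β} → Option.Rel r a b → (a.isSome ↔ b.isSome)
  | _, _, .some _ | _, _, .none => Iff.rfl

namespace AbsRW

namespace TmS

variable {S C V : Type}

theorem Prec.nonval_of_forall₂ {s : S} {ts ts' : List (TmS S C V)}
    (h : List.Forall₂ Prec ts ts') : Prec (.nonval s ts) (.nonval s ts') :=
  .nonvalCongr h.length_eq fun _ hp => List.forall₂_zip h hp

theorem Prec.val_of_forall₂ {s : S} {ts ts' : List (TmS S C V)}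
    (h : List.Forall₂ Prec ts ts') : Prec (.val s ts) (.val s ts') :=
  .valCongr h.length_eq fun _ hp => List.forall₂_zip h hp

/-- `Prec` with reflexivity and transitivity eliminated, so that derivations follow the shape of
the terms. -/
inductive PrecS : TmS S C V → TmS S C V → Prop where
  | nonval {s ts ts'} : List.Forall₂ PrecS ts ts' → PrecS (.nonval s ts) (.nonval s ts')
  | val {s ts ts'} : List.Forall₂ PrecS ts ts' → PrecS (.val s ts) (.val s ts')
  | const {c} : PrecS (.const c) (.const c)
  | pvar {v mt} : PrecS (.pvar v mt) (.pvar v mt)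
  | star {mt} : PrecS (.star mt) (.star mt)
  | nonvalStar {s ts} : PrecS (.nonval s ts) (.star .NonVal)
  | valStar {s ts} : PrecS (.val s ts) (.star .Val)
  | allStar {t} : PrecS t (.star .All)

theorem PrecS.refl : (t : TmS S C V) → PrecS t t
  | .nonval _ ts => .nonval (List.forall₂_same.2 fun t _ => PrecS.refl t)
  | .val _ ts => .val (List.forall₂_same.2 fun t _ => PrecS.refl t)
  | .const _ => .const
  | .pvar _ _ => .pvar
  | .star _ => .star

mutual

theorem PrecS.trans {a b c : TmS S C V} : PrecS a b → PrecS b c → PrecS a c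
  | .nonval h₁, .nonval h₂ => .nonval (PrecS.forall₂_trans h₁ h₂)
  | .val h₁, .val h₂ => .val (PrecS.forall₂_trans h₁ h₂)
  | h, .const | h, .pvar | h, .star => h
  | .nonval _, .nonvalStar => .nonvalStar
  | .val _, .valStar => .valStar
  | _, .allStar => .allStar

theorem PrecS.forall₂_trans {l₁ l₂ l₃ : List (TmS S C V)} :
    List.Forall₂ PrecS l₁ l₂ → List.Forall₂ PrecS l₂ l₃ → List.Forall₂ PrecS l₁ l₃
  | .nil, .nil => .nil
  | .cons h hs, .cons h' hs' => .cons (h.trans h') (PrecS.forall₂_trans hs hs')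

end

mutual

theorem PrecS.prec {a b : TmS S C V} : PrecS a b → Prec a b
  | .nonval h => .nonval_of_forall₂ (PrecS.forall₂_prec h)
  | .val h => .val_of_forall₂ (PrecS.forall₂_prec h)
  | .const | .pvar | .star => .refl
  | .nonvalStar => .starNonVal
  | .valStar => .starVal
  | .allStar => .starAll

theorem PrecS.forall₂_prec {l₁ l₂ : List (TmS S C V)} :
    List.Forall₂ PrecS l₁ l₂ → List.Forall₂ Prec l₁ l₂
  | .nil => .nil
  | .cons h hs => .cons h.prec (PrecS.forall₂_prec hs)

end

theorem Prec.precS {a b : TmS S C V} (h : Prec a b) : PrecS a b := by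
  induction h with
  | refl => exact .refl _
  | trans _ _ ih₁ ih₂ => exact ih₁.trans ih₂
  | nonvalCongr hlen _ ih => exact .nonval (List.forall₂_iff_zip.2 ⟨hlen, fun hp => ih _ hp⟩)
  | valCongr hlen _ ih => exact .val (List.forall₂_iff_zip.2 ⟨hlen, fun hp => ih _ hp⟩)
  | starNonVal => exact .nonvalStar
  | starVal => exact .valStar
  | starAll => exact .allStar

/-- Leaves weigh `2` so that they are heavier than `⋆_Val` and `⋆_NonVal`. -/
def weight : TmS S C V → ℕ
  | .nonval _ ts | .val _ ts => 2 + (ts.map weight).sum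
  | .const _ | .pvar _ _ => 2
  | .star .All => 0
  | .star .Val | .star .NonVal => 1

mutual

theorem PrecS.eq_or_weight_lt {a b : TmS S C V} : PrecS a b → a = b ∨ b.weight < a.weight
  | .nonval h | .val h => by
    rcases PrecS.forall₂_eq_or_weight_lt h with rfl | hlt
    · exact .inl rfl
    · right; simp only [weight]; omega
  | .const | .pvar | .star => .inl rfl
  | .nonvalStar | .valStar => .inr (by simp only [weight]; omega)
  | @PrecS.allStar _ _ _ a => by
    rcases a with _ | _ | _ | _ | (_ | _ | _) <;> simp [weight]

theorem PrecS.forall₂_eq_or_weight_lt {l₁ l₂ : List (TmS S C V)} :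
    List.Forall₂ PrecS l₁ l₂ → l₁ = l₂ ∨ (l₂.map weight).sum < (l₁.map weight).sum
  | .nil => .inl rfl
  | .cons h hs => by
    simp only [List.cons.injEq, List.map_cons, List.sum_cons]
    rcases PrecS.eq_or_weight_lt h with rfl | hlt <;>
      rcases PrecS.forall₂_eq_or_weight_lt hs with rfl | hlts
    · exact .inl ⟨rfl, rfl⟩
    all_goals right; omega

end

theorem PrecS.weight_le {a b : TmS S C V} (h : PrecS a b) : b.weight ≤ a.weight := by
  rcases h.eq_or_weight_lt with rfl | hlt <;> omega

def IsMeetS (u w z : TmS S C V) : Prop :=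
  PrecS z u ∧ PrecS z w ∧ ∀ y, PrecS y u → PrecS y w → PrecS y z

theorem isMeetS_of_precS {u w : TmS S C V} (h : PrecS u w) : IsMeetS u w u :=
  ⟨.refl u, h, fun _ hyu _ => hyu⟩

theorem IsMeetS.symm {u w z : TmS S C V} (h : IsMeetS u w z) : IsMeetS w u z :=
  ⟨h.2.1, h.1, fun y hyw hyu => h.2.2 y hyu hyw⟩

mutual

theorem PrecS.exists_isMeetS {x u w : TmS S C V} :
    PrecS x u → PrecS x w → ∃ z, IsMeetS u w z
  | .nonval h₁, .nonval h₂ => by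
    obtain ⟨zs, hzu, hzw, hz⟩ := PrecS.forall₂_exists_meet h₁ h₂
    refine ⟨.nonval _ zs, .nonval hzu, .nonval hzw, fun y hyu hyw => ?_⟩
    cases hyu with | nonval hyu => cases hyw with | nonval hyw => exact .nonval (hz _ hyu hyw)
  | .val h₁, .val h₂ => by
    obtain ⟨zs, hzu, hzw, hz⟩ := PrecS.forall₂_exists_meet h₁ h₂
    refine ⟨.val _ zs, .val hzu, .val hzw, fun y hyu hyw => ?_⟩
    cases hyu with | val hyu => cases hyw with | val hyw => exact .val (hz _ hyu hyw)
  | _, .allStar => ⟨_, isMeetS_of_precS .allStar⟩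
  | .allStar, _ => ⟨_, (isMeetS_of_precS .allStar).symm⟩
  | .nonval _, .nonvalStar => ⟨_, isMeetS_of_precS .nonvalStar⟩
  | .nonvalStar, .nonval _ => ⟨_, (isMeetS_of_precS .nonvalStar).symm⟩
  | .val _, .valStar => ⟨_, isMeetS_of_precS .valStar⟩
  | .valStar, .val _ => ⟨_, (isMeetS_of_precS .valStar).symm⟩
  | .nonvalStar, .nonvalStar | .valStar, .valStar => ⟨_, isMeetS_of_precS (.refl _)⟩
  | .const, h | .pvar, h | .star, h => ⟨_, isMeetS_of_precS h⟩

theorem PrecS.forall₂_exists_meet {xs us ws : List (TmS S C V)} :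
    List.Forall₂ PrecS xs us → List.Forall₂ PrecS xs ws →
      ∃ zs, List.Forall₂ PrecS zs us ∧ List.Forall₂ PrecS zs ws ∧
        ∀ ys, List.Forall₂ PrecS ys us → List.Forall₂ PrecS ys ws → List.Forall₂ PrecS ys zs
  | .nil, .nil => ⟨[], .nil, .nil, fun _ hyu _ => hyu⟩
  | .cons h hs, .cons h' hs' => by
    obtain ⟨z, hzu, hzw, hz⟩ := PrecS.exists_isMeetS h h'
    obtain ⟨zs, hzsu, hzsw, hzs⟩ := PrecS.forall₂_exists_meet hs hs'
    refine ⟨z :: zs, .cons hzu hzsu, .cons hzw hzsw, fun ys hyu hyw => ?_⟩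
    cases hyu with | cons hyu hysu => cases hyw with | cons hyw hysw =>
      exact .cons (hz _ hyu hyw) (hzs _ hysu hysw)

end

theorem subst_nonval (σ : V → Option (TmS S C V)) (s : S) (ts : List (TmS S C V)) :
    (nonval s ts).subst σ = nonval s (ts.map (subst σ)) := by
  simp [subst]

theorem subst_val (σ : V → Option (TmS S C V)) (s : S) (ts : List (TmS S C V)) :
    (val s ts).subst σ = val s (ts.map (subst σ)) := by
  simp [subst]

theorem prec_subst_of_forall_rel {σ σ' : V → Option (TmS S C V)}
    (h : ∀ v, Option.Rel Prec (σ v) (σ' v)) : ∀ p : TmS S C V, Prec (p.subst σ) (p.subst σ')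
  | .nonval _ ts => by
    rw [subst_nonval, subst_nonval]
    exact .nonval_of_forall₂ <| List.forall₂_map_left_iff.2 <| List.forall₂_map_right_iff.2 <|
      List.forall₂_same.2 fun p _ => prec_subst_of_forall_rel h p
  | .val _ ts => by
    rw [subst_val, subst_val]
    exact .val_of_forall₂ <| List.forall₂_map_left_iff.2 <| List.forall₂_map_right_iff.2 <|
      List.forall₂_same.2 fun p _ => prec_subst_of_forall_rel h p
  | .const _ | .star _ => by simp only [subst]; exact .refl
  | .pvar v _ => by
    simp only [subst]
    match σ v, σ' v, h v with
    | _, _, .none => exact .refl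
    | _, _, .some hr => exact hr

end TmS

section Lub

variable {S C V : Type}

theorem exists_isLubT {A : Set (TmS S C V)} (hA : A.Nonempty) : ∃ u, IsLubT A u := by
  obtain ⟨x, hx⟩ := hA
  set B := {u : TmS S C V | ∀ a ∈ A, TmS.PrecS a u}
  have hB : (TmS.weight '' B).Nonempty := ⟨_, .star .All, fun _ _ => .allStar, rfl⟩
  have hbdd : BddAbove (TmS.weight '' B) := by
    refine ⟨x.weight, ?_⟩
    rintro _ ⟨u, hu, rfl⟩
    exact (hu x hx).weight_le
  obtain ⟨u, hu, hmax⟩ := Nat.sSup_mem hB hbdd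
  refine ⟨u, fun a ha => (hu a ha).prec, fun w hw => ?_⟩
  obtain ⟨z, hzu, hzw, hz⟩ := (hu x hx).exists_isMeetS (hw x hx).precS
  have hzB : z ∈ B := fun a ha => hz a (hu a ha) (hw a ha).precS
  rcases hzu.eq_or_weight_lt with rfl | hlt
  · exact hzw.prec
  · have := le_csSup hbdd ⟨z, hzB, rfl⟩
    omega

open Classical in
noncomputable def optLubT (A : Set (TmS S C V)) : Option (TmS S C V) :=
  if h : A.Nonempty then some (exists_isLubT h).choose else none

theorem optIsLubT_optLubT (A : Set (TmS S C V)) : OptIsLubT A (optLubT A) := by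
  by_cases h : A.Nonempty
  · exact .inr ⟨_, dif_pos h, (exists_isLubT h).choose_spec⟩
  · exact .inl ⟨Set.not_nonempty_iff_eq_empty.1 h, dif_neg h⟩

theorem optionRel_optLubT {o : Option (TmS S C V)} {A : Set (TmS S C V)}
    (hsome : ∀ u, o = some u → u ∈ A) (hnone : o = none → A = ∅) :
    Option.Rel TmS.Prec o (optLubT A) := by
  cases o with
  | none =>
    rw [optLubT, dif_neg (by simp [hnone rfl])]
    exact .none
  | some u =>
    have hA : A.Nonempty := ⟨u, hsome u rfl⟩
    rw [optLubT, dif_pos hA]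
    exact .some ((exists_isLubT hA).choose_spec.1 u (hsome u rfl))

theorem ConcMatchTm.isSome_iff {σ σ₀ : V → Option (TmS S C V)} {p t t₀ : TmS S C V}
    (h : ConcMatchTm σ p t) (h₀ : ConcMatchTm σ₀ p t₀) (v : V) :
    (σ v).isSome ↔ (σ₀ v).isSome :=
  (h.2.2.1 v).trans (h₀.2.2.1 v).symm

end Lub

/-- **Abstract Matching Property for terms.** If the pattern
`tp` matches the concrete term `t` via `σ`, and `t ≺ t'`, then `t'`
abstractly matches `tp` with a witness `σ'` of the same domain as `σ`,
pointwise above `σ`, and with `t ≺ σ'(tp)`. -/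
theorem abstract_matching_property {S C V : Type}
    (tp t t' : TmS S C V) (σ : V → Option (TmS S C V))
    (hmatch : ConcMatchTm σ tp t) (hprec : TmS.Prec t t') :
    ∃ σ' : V → Option (TmS S C V),
      AbsWitnessTm tp t' σ' ∧
      (∀ v, (σ v).isSome ↔ (σ' v).isSome) ∧
      (∀ v u u', σ v = some u → σ' v = some u' → TmS.Prec u u') ∧
      TmS.Prec t (TmS.subst σ' tp) := by
  set A : V → Set (TmS S C V) := fun v =>
    {u | ∃ t₀ σ₀, TmS.Prec t₀ t' ∧ ConcMatchTm σ₀ tp t₀ ∧ σ₀ v = some u}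
  have hrel : ∀ v, Option.Rel TmS.Prec (σ v) (optLubT (A v)) := fun v =>
    optionRel_optLubT (fun u hu => ⟨t, σ, hprec, hmatch, hu⟩) fun hv =>
      Set.eq_empty_of_forall_notMem fun u ⟨_, _, _, hmatch₀, hu⟩ => by
        simpa [hv, hu] using hmatch.isSome_iff hmatch₀ v
  refine ⟨fun v => optLubT (A v), ⟨⟨t, σ, hprec, hmatch⟩, fun v => optIsLubT_optLubT (A v)⟩,
    fun v => (hrel v).isSome_iff, fun v u u' hu hu' => ?_, ?_⟩
  · simpa [hu, hu'] using hrel v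
  · simpa only [hmatch.1] using TmS.prec_subst_of_forall_rel hrel tp

end AbsRW
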